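/- For positive definite n×n complex matrices A, B and any real y, Re Tr(A^{1/4+iy} B^{1/4+iy} A^{3/4-iy} B^{3/4-iy}) ≤ Tr(AB). -/

import Mathlib

open Matrix Complex
open scoped ComplexOrder

/-- Real power of a (Hermitian, intended positive semidefinite) matrix via the spectral
decomposition; junk value `A` if `A` is not Hermitian. -/
noncomputable def Matrix.mpow {n : ℕ} (A : Matrix (Fin n) (Fin n) ℂ) (t : ℝ) :
    Matrix (Fin n) (Fin n) ℂ :=
  if hA : A.IsHermitian then
    (hA.eigenvectorUnitary : Matrix (Fin n) (Fin n) ℂ) *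
      Matrix.diagonal (fun i => ((hA.eigenvalues i ^ t : ℝ) : ℂ)) *
      (star (hA.eigenvectorUnitary : Matrix (Fin n) (Fin n) ℂ))
  else A

/-- Complex power `A ^ z = exp (z log A)` of a (Hermitian, intended positive definite) matrix via
the spectral decomposition; junk value `A` if `A` is not Hermitian. -/
noncomputable def Matrix.mcpow {n : ℕ} (A : Matrix (Fin n) (Fin n) ℂ) (z : ℂ) :
    Matrix (Fin n) (Fin n) ℂ :=
  if hA : A.IsHermitian then
    (hA.eigenvectorUnitary : Matrix (Fin n) (Fin n) ℂ) *
      Matrix.diagonal (fun i => Complex.exp (z * Real.log (hA.eigenvalues i))) *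
      (star (hA.eigenvectorUnitary : Matrix (Fin n) (Fin n) ℂ))
  else A

/-- Schatten `r`-norm of a matrix: `(∑ sᵢ(X)^r)^(1/r)`, where the `sᵢ(X)` are the singular
values, i.e. the square roots of the eigenvalues of `Xᴴ * X`. -/
noncomputable def Matrix.schatten {n : ℕ} (r : ℝ) (X : Matrix (Fin n) (Fin n) ℂ) : ℝ :=
  (∑ i, ((Matrix.posSemidef_conjTranspose_mul_self X).1.eigenvalues i) ^ (r / 2)) ^ (1 / r)

/-- Frobenius (Hilbert–Schmidt) norm of a matrix. -/
noncomputable def Matrix.frob {n : ℕ} (X : Matrix (Fin n) (Fin n) ℂ) : ℝ :=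
  Real.sqrt (Xᴴ * X).trace.re

/-- Operator (spectral) norm of a matrix. -/
noncomputable def Matrix.opNorm {n : ℕ} (X : Matrix (Fin n) (Fin n) ℂ) : ℝ :=
  ‖Matrix.toEuclideanCLM (𝕜 := ℂ) X‖

/-- Smallest singular value of a matrix. -/
noncomputable def Matrix.sMin {n : ℕ} (X : Matrix (Fin n) (Fin n) ℂ) : ℝ :=
  ⨅ i, Real.sqrt ((Matrix.posSemidef_conjTranspose_mul_self X).1.eigenvalues i)

/-! Write `a = 1/4 + iy`, so that `ā = 1/2 - a` and `1 - a = ā + 1/2`. By cyclicity the trace equals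
`Tr(X Y W)` with `X = B^ā A^a`, `Y = B^a A^ā` and `W = A^{1/2} B^{1/2}`, where `‖W‖₂² = Tr(AB)`.
Cauchy–Schwarz for the Hilbert–Schmidt inner product gives `|Tr(XYW)| ≤ ‖XY‖₂ ‖W‖₂` and
`‖XY‖₂² ≤ ‖X*X‖₂ ‖YY*‖₂`; finally `X*X = A^ā B^{1/2} A^a`, so
`‖X*X‖₂² = Tr((B^{1/2} A^{1/2})²) ≤ ‖B^{1/2} A^{1/2}‖₂² = Tr(AB)`, and likewise for `YY*`. -/

open ComplexConjugate

namespace Matrix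

variable {n : ℕ} {A B : Matrix (Fin n) (Fin n) ℂ}

lemma trace_conjTranspose_mul (M N : Matrix (Fin n) (Fin n) ℂ) :
    (Mᴴ * N).trace = ∑ p : Fin n × Fin n, conj (M p.2 p.1) * N p.2 p.1 := by
  simp [Fintype.sum_prod_type, Matrix.trace, Matrix.mul_apply]

lemma re_trace_conjTranspose_mul_self (M : Matrix (Fin n) (Fin n) ℂ) :
    (Mᴴ * M).trace.re = ∑ p : Fin n × Fin n, ‖M p.2 p.1‖ ^ 2 := by
  simp only [trace_conjTranspose_mul, re_sum, conj_mul', ← ofReal_pow, ofReal_re]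

lemma frob_eq_sqrt_sum (M : Matrix (Fin n) (Fin n) ℂ) :
    M.frob = √(∑ p : Fin n × Fin n, ‖M p.2 p.1‖ ^ 2) := by
  rw [frob, re_trace_conjTranspose_mul_self]

lemma frob_sq (M : Matrix (Fin n) (Fin n) ℂ) : M.frob ^ 2 = (Mᴴ * M).trace.re := by
  rw [frob_eq_sqrt_sum, Real.sq_sqrt (by positivity), re_trace_conjTranspose_mul_self]

lemma frob_conjTranspose (M : Matrix (Fin n) (Fin n) ℂ) : Mᴴ.frob = M.frob := by
  rw [frob, frob, conjTranspose_conjTranspose, trace_mul_comm]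

lemma norm_trace_conjTranspose_mul_le (M N : Matrix (Fin n) (Fin n) ℂ) :
    ‖(Mᴴ * N).trace‖ ≤ M.frob * N.frob := by
  rw [trace_conjTranspose_mul, frob_eq_sqrt_sum, frob_eq_sqrt_sum]
  calc ‖∑ p : Fin n × Fin n, conj (M p.2 p.1) * N p.2 p.1‖
      ≤ ∑ p : Fin n × Fin n, ‖M p.2 p.1‖ * ‖N p.2 p.1‖ := by
        refine (norm_sum_le _ _).trans_eq ?_
        simp only [norm_mul, RCLike.norm_conj]
    _ ≤ _ := Real.sum_mul_le_sqrt_mul_sqrt _ _ _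

lemma norm_trace_mul_le (M N : Matrix (Fin n) (Fin n) ℂ) :
    ‖(M * N).trace‖ ≤ M.frob * N.frob := by
  simpa only [conjTranspose_conjTranspose, frob_conjTranspose] using
    norm_trace_conjTranspose_mul_le Mᴴ N

lemma re_trace_mul_le (M N : Matrix (Fin n) (Fin n) ℂ) :
    (M * N).trace.re ≤ M.frob * N.frob :=
  (re_le_norm _).trans (norm_trace_mul_le M N)

lemma frob_mul_sq_le (X Y : Matrix (Fin n) (Fin n) ℂ) :
    (X * Y).frob ^ 2 ≤ (Xᴴ * X).frob * (Y * Yᴴ).frob := by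
  have hcyc : (Yᴴ * Xᴴ * (X * Y)).trace = ((Xᴴ * X) * (Y * Yᴴ)).trace := by
    rw [← trace_mul_cycle]
    simp only [Matrix.mul_assoc]
  rw [frob_sq, conjTranspose_mul, hcyc]
  exact re_trace_mul_le _ _

namespace IsHermitian

lemma mcpow_eq (hA : A.IsHermitian) (z : ℂ) :
    A.mcpow z = (hA.eigenvectorUnitary : Matrix (Fin n) (Fin n) ℂ) *
      diagonal (fun i => Complex.exp (z * Real.log (hA.eigenvalues i))) *
      star (hA.eigenvectorUnitary : Matrix (Fin n) (Fin n) ℂ) := by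
  rw [mcpow, dif_pos hA]

lemma mcpow_mul_mcpow (hA : A.IsHermitian) (z w : ℂ) :
    A.mcpow z * A.mcpow w = A.mcpow (z + w) := by
  have hU : star (hA.eigenvectorUnitary : Matrix (Fin n) (Fin n) ℂ) * hA.eigenvectorUnitary = 1 :=
    mem_unitaryGroup_iff'.mp hA.eigenvectorUnitary.2
  simp only [hA.mcpow_eq, Matrix.mul_assoc]
  rw [← Matrix.mul_assoc _ (hA.eigenvectorUnitary : Matrix (Fin n) (Fin n) ℂ), hU,
    Matrix.one_mul, ← Matrix.mul_assoc (diagonal _), diagonal_mul_diagonal]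
  simp only [← exp_add, add_mul]

lemma mcpow_mul_mcpow_mul (hA : A.IsHermitian) (z w : ℂ) (C : Matrix (Fin n) (Fin n) ℂ) :
    A.mcpow z * (A.mcpow w * C) = A.mcpow (z + w) * C := by
  rw [← Matrix.mul_assoc, hA.mcpow_mul_mcpow]

lemma conjTranspose_mcpow (hA : A.IsHermitian) (z : ℂ) : (A.mcpow z)ᴴ = A.mcpow (conj z) := by
  simp only [hA.mcpow_eq, conjTranspose_mul, diagonal_conjTranspose, star_eq_conjTranspose,
    conjTranspose_conjTranspose, Matrix.mul_assoc]
  congr 3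
  funext i
  rw [Pi.star_apply, star_def, ← Complex.exp_conj, map_mul, conj_ofReal]

end IsHermitian

lemma PosDef.mcpow_one (hA : A.PosDef) : A.mcpow 1 = A := by
  have hexp : (fun i => Complex.exp (1 * Real.log (hA.1.eigenvalues i))) =
      fun i => ((hA.1.eigenvalues i : ℝ) : ℂ) := by
    funext i
    rw [one_mul, ← ofReal_exp, Real.exp_log (hA.eigenvalues_pos i)]
  rw [hA.1.mcpow_eq, hexp]
  exact hA.1.spectral_theorem.symm

lemma PosDef.frob_mcpow_half_mul_mcpow_half_sq (hA : A.PosDef) (hB : B.PosDef) :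
    (A.mcpow (1 / 2) * B.mcpow (1 / 2)).frob ^ 2 = (A * B).trace.re := by
  have hhalf : conj (1 / 2 : ℂ) = 1 / 2 := by simp [map_ofNat]
  have hsum : (1 / 2 + 1 / 2 : ℂ) = 1 := by norm_num
  rw [frob_sq, conjTranspose_mul, hA.1.conjTranspose_mcpow, hB.1.conjTranspose_mcpow, hhalf,
    Matrix.mul_assoc, hA.1.mcpow_mul_mcpow_mul, hsum, hA.mcpow_one, trace_mul_comm,
    Matrix.mul_assoc, hB.1.mcpow_mul_mcpow, hsum, hB.mcpow_one]

lemma PosDef.frob_conjTranspose_mul_self_sq_le (hA : A.PosDef) (hB : B.PosDef) {z : ℂ}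
    (hz : z.re = 1 / 4) :
    ((B.mcpow (conj z) * A.mcpow z)ᴴ * (B.mcpow (conj z) * A.mcpow z)).frob ^ 2 ≤
      (A * B).trace.re := by
  set X := B.mcpow (conj z) * A.mcpow z
  have hzz : z + conj z = 1 / 2 := by rw [add_conj, hz]; norm_num
  have hXX : Xᴴ * X = A.mcpow (conj z) * (B.mcpow (1 / 2) * A.mcpow z) := by
    rw [conjTranspose_mul, hA.1.conjTranspose_mcpow, hB.1.conjTranspose_mcpow, conj_conj,
      Matrix.mul_assoc, hB.1.mcpow_mul_mcpow_mul, hzz]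
  set V := B.mcpow (1 / 2) * A.mcpow (1 / 2)
  calc (Xᴴ * X).frob ^ 2
      = (A.mcpow (conj z) * (B.mcpow (1 / 2) * (A.mcpow (1 / 2) *
          (B.mcpow (1 / 2) * A.mcpow z)))).trace.re := by
        rw [frob_sq, conjTranspose_mul, conjTranspose_conjTranspose, hXX]
        simp only [Matrix.mul_assoc]
        rw [hA.1.mcpow_mul_mcpow_mul, hzz]
    _ = (V * V).trace.re := by
        rw [trace_mul_comm]
        simp only [V, Matrix.mul_assoc]
        rw [hA.1.mcpow_mul_mcpow, hzz]
    _ ≤ V.frob * V.frob := re_trace_mul_le V V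
    _ = (A * B).trace.re := by
        rw [← sq, hB.frob_mcpow_half_mul_mcpow_half_sq hA, trace_mul_comm]

lemma PosDef.re_trace_mcpow_mul_le (hA : A.PosDef) (hB : B.PosDef) {a : ℂ} (ha : a.re = 1 / 4) :
    (A.mcpow a * B.mcpow a * A.mcpow (1 - a) * B.mcpow (1 - a)).trace.re ≤ (A * B).trace.re := by
  obtain ⟨c, hca⟩ : ∃ c, conj a = c := ⟨_, rfl⟩
  have hcc : conj c = a := by rw [← hca, conj_conj]
  have hac : a + c = 1 / 2 := by rw [← hca, add_conj, ha]; norm_num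
  have hXX := hA.frob_conjTranspose_mul_self_sq_le hB ha
  have hYY := hB.frob_conjTranspose_mul_self_sq_le hA (z := c) (by rw [← hca, conj_re, ha])
  rw [hca] at hXX
  rw [hcc, trace_mul_comm B] at hYY
  have hW := hA.frob_mcpow_half_mul_mcpow_half_sq hB
  have hcyc : (A.mcpow a * B.mcpow a * A.mcpow (1 - a) * B.mcpow (1 - a)).trace =
      (B.mcpow c * A.mcpow a * (A.mcpow a * B.mcpow c)ᴴ *
        (A.mcpow (1 / 2) * B.mcpow (1 / 2))).trace := by
    have h1 : 1 - a = c + 1 / 2 := by linear_combination -hac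
    have h2 : 1 - a = 1 / 2 + c := by rw [h1, add_comm]
    rw [conjTranspose_mul, hA.1.conjTranspose_mcpow, hB.1.conjTranspose_mcpow, hca, hcc, h2,
      ← hB.1.mcpow_mul_mcpow, ← Matrix.mul_assoc, trace_mul_cycle, ← h2]
    simp only [Matrix.mul_assoc]
    rw [hA.1.mcpow_mul_mcpow_mul, ← h1]
  set X := B.mcpow c * A.mcpow a
  set Y := (A.mcpow a * B.mcpow c)ᴴ
  set W := A.mcpow (1 / 2) * B.mcpow (1 / 2)
  have hXY : (X * Y).frob ^ 2 ≤ (A * B).trace.re := by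
    have := frob_mul_sq_le X Y
    rw [conjTranspose_conjTranspose] at this
    nlinarith [sq_nonneg ((Xᴴ * X).frob - (Y * Yᴴ).frob)]
  rw [hcyc]
  nlinarith [re_trace_mul_le (X * Y) W, sq_nonneg ((X * Y).frob - W.frob)]

end Matrix

theorem stmt2 {n : ℕ} {A B : Matrix (Fin n) (Fin n) ℂ}
    (hA : A.PosDef) (hB : B.PosDef) (y : ℝ) :
    (A.mcpow (1 / 4 + (y : ℂ) * Complex.I) * B.mcpow (1 / 4 + (y : ℂ) * Complex.I) *
      A.mcpow (3 / 4 - (y : ℂ) * Complex.I) * B.mcpow (3 / 4 - (y : ℂ) * Complex.I)).trace.re ≤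
      (A * B).trace.re := by
  have key := hA.re_trace_mcpow_mul_le hB (a := 1 / 4 + (y : ℂ) * Complex.I) (by simp)
  rwa [show (1 : ℂ) - (1 / 4 + (y : ℂ) * Complex.I) = 3 / 4 - (y : ℂ) * Complex.I by ring] at key
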